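/- arXiv:1612.05495 — 2 statements merged into one kernel-verified Lean document; each statement's English description precedes it below -/
import Mathlib

section
/- Let $M \geq 1$ and let $y_1, \dots, y_M$ be non-negative real numbers with $\sum_{m=1}^M y_m = N$, extended periodically by $y_m = y_{m \bmod M}$. For an integer $s \geq 1$ define $H(s) = \sum_{m=1}^M \sum_{\ell=-s+1}^{s-1} y_m y_{m+\ell}$. Then for every integer $S \geq 1$ with $2S < M$ we have $\frac{1}{S} \sum_{s=1}^S H(s) \geq \frac{S N^2}{M}$. -/
/-!
Writing `g m = y m + y (m + 1) + ⋯ + y (m + S - 1)` for the window sums of `y`, the sum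
`∑ s ≤ S, H s` is exactly `∑ m, g m ^ 2`: both count the products `y (m + k) * y (m + k')` with
`k, k' < S`, grouped on the left by `s = max k k' + 1` and `ℓ = k' - k`, after a periodic shift in
`m`. By periodicity `∑ m, g m = S * N`, so Cauchy–Schwarz gives `(S * N) ^ 2 ≤ M * ∑ m, g m ^ 2`.
-/

open Finset

theorem sum_Icc_sum_Icc_eq_sum_range_sum_range_sub {α : Type*} [AddCommMonoid α]
    (h : ℤ → α) (S : ℕ) :
    ∑ s ∈ Icc 1 S, ∑ ℓ ∈ Icc (-(s : ℤ) + 1) ((s : ℤ) - 1), h ℓ =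
      ∑ k ∈ range S, ∑ k' ∈ range S, h ((k' : ℤ) - k) := by
  rw [sum_sigma', ← sum_product']
  refine sum_bij'
    (fun p _ => (((p.1 : ℤ) - 1 - max p.2 0).toNat, ((p.1 : ℤ) - 1 + min p.2 0).toNat))
    (fun p _ => ⟨max p.1 p.2 + 1, (p.2 : ℤ) - p.1⟩) ?_ ?_ ?_ ?_ ?_ <;>
  rintro ⟨a, b⟩ hab <;>
  simp only [mem_sigma, mem_product, mem_Icc, mem_range, Sigma.mk.injEq, Prod.mk.injEq] at hab ⊢
  all_goals first | omega | (rw [heq_iff_eq]; omega) | (congr 1; omega)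

namespace Function.Periodic

variable {α : Type*} [AddCommMonoid α] {f : ℤ → α} {M : ℕ}

theorem sum_range_comp_add_one (hf : Periodic f M) :
    ∑ m ∈ range M, f (m + 1) = ∑ m ∈ range M, f m := by
  cases M with
  | zero => simp
  | succ K =>
    rw [sum_range_succ, sum_range_succ']
    have hwrap : f ((K : ℤ) + 1) = f 0 := by simpa using hf 0
    push_cast
    rw [hwrap]

theorem sum_range_comp_add (hf : Periodic f M) (a : ℤ) :
    ∑ m ∈ range M, f (m + a) = ∑ m ∈ range M, f m := by
  induction a using Int.induction_on with
  | zero => simp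
  | succ k ih =>
    rw [← ih, ← (hf.add_const (k : ℤ)).sum_range_comp_add_one]
    congr! 2
    ring
  | pred k ih =>
    rw [← ih, ← (hf.add_const (-(k : ℤ) - 1)).sum_range_comp_add_one]
    congr! 2
    ring

end Function.Periodic

section WindowSums

variable {M : ℕ} {y : ℤ → ℝ}

theorem sum_range_mul_comp_add_sub (hy : Function.Periodic y M) (k k' : ℤ) :
    ∑ m ∈ range M, y m * y (m + (k' - k)) = ∑ m ∈ range M, y (m + k) * y (m + k') := by
  have hprod : Function.Periodic (fun x => y x * y (x + (k' - k))) M := hy.mul (hy.add_const _)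
  rw [← hprod.sum_range_comp_add k]
  congr! 3
  ring

theorem sum_Icc_autocorrelation_eq_sum_sq_window (hy : Function.Periodic y M) (S : ℕ) :
    ∑ s ∈ Icc 1 S, ∑ m ∈ range M, ∑ ℓ ∈ Icc (-(s : ℤ) + 1) ((s : ℤ) - 1), y m * y (m + ℓ) =
      ∑ m ∈ range M, (∑ k ∈ range S, y (m + k)) ^ 2 := by
  calc ∑ s ∈ Icc 1 S, ∑ m ∈ range M, ∑ ℓ ∈ Icc (-(s : ℤ) + 1) ((s : ℤ) - 1), y m * y (m + ℓ)
      = ∑ s ∈ Icc 1 S, ∑ ℓ ∈ Icc (-(s : ℤ) + 1) ((s : ℤ) - 1),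
          ∑ m ∈ range M, y m * y (m + ℓ) := sum_congr rfl fun _ _ => sum_comm
    _ = ∑ k ∈ range S, ∑ k' ∈ range S, ∑ m ∈ range M, y (m + k) * y (m + k') := by
      simp only [sum_Icc_sum_Icc_eq_sum_range_sum_range_sub, sum_range_mul_comp_add_sub hy]
    _ = ∑ m ∈ range M, (∑ k ∈ range S, y (m + k)) ^ 2 := by
      simp only [sq, sum_mul_sum]
      exact (sum_congr rfl fun _ _ => sum_comm).trans sum_comm

theorem sum_sum_window_eq_mul_sum (hy : Function.Periodic y M) (S : ℕ) :
    ∑ m ∈ range M, ∑ k ∈ range S, y (m + k) = S * ∑ m ∈ range M, y m := by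
  rw [sum_comm]
  simp [hy.sum_range_comp_add]

end WindowSums

theorem stmt_0_general (M : ℕ) (y : ℤ → ℝ) (N : ℝ)
    (hper : ∀ m : ℤ, y (m + M) = y m)
    (hsum : ∑ m ∈ Finset.range M, y (m : ℤ) = N)
    (S : ℕ) :
    (S : ℝ) * N ^ 2 / M ≤
      (1 / S) * ∑ s ∈ Finset.Icc 1 S,
        ∑ m ∈ Finset.range M, ∑ ℓ ∈ Finset.Icc (-(s : ℤ) + 1) ((s : ℤ) - 1),
          y (m : ℤ) * y ((m : ℤ) + ℓ) := by
  rw [sum_Icc_autocorrelation_eq_sum_sq_window hper]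
  have hCS := sq_sum_le_card_mul_sum_sq (s := range M) (f := fun m : ℕ => ∑ k ∈ range S, y (m + k))
  rw [card_range, sum_sum_window_eq_mul_sum hper, hsum] at hCS
  calc (S : ℝ) * N ^ 2 / M = 1 / S * ((S * N) ^ 2 / M) := by
        rcases S.eq_zero_or_pos with rfl | hS
        · simp
        · field_simp
    _ ≤ 1 / S * ∑ m ∈ range M, (∑ k ∈ range S, y (m + k)) ^ 2 := by
        gcongr
        exact div_le_of_le_mul₀ (by positivity) (by positivity) (by linarith)

theorem stmt_0 (M : ℕ) (hM : 1 ≤ M) (y : ℤ → ℝ) (N : ℝ)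
    (hy : ∀ m : ℤ, 0 ≤ y m)
    (hper : ∀ m : ℤ, y (m + M) = y m)
    (hsum : ∑ m ∈ Finset.range M, y (m : ℤ) = N)
    (S : ℕ) (hS : 1 ≤ S) (hSM : 2 * S < M) :
    (S : ℝ) * N ^ 2 / M ≤
      (1 / S) * ∑ s ∈ Finset.Icc 1 S,
        ∑ m ∈ Finset.range M, ∑ ℓ ∈ Finset.Icc (-(s : ℤ) + 1) ((s : ℤ) - 1),
          y (m : ℤ) * y ((m : ℤ) + ℓ) :=
  stmt_0_general M y N hper hsum S
end

section
/- Let $x_1, \dots, x_N \in [0,1)$ and for an integer $s$ with $1 \leq s$ and $2s < N$, set $F_N(s) = \frac{1}{N}\#\{(m,n) : 1 \leq m,n \leq N,\ m \neq n,\ \|x_m - x_n\| \leq s/N\}$. Then for every integer $S \geq 1$ with $2S < N$, $\frac{1}{S}\sum_{s=1}^{S} (F_N(s) + 1) \geq S$. -/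
open Finset

/-- Distance to the nearest integer. -/
noncomputable def distToInt (t : ℝ) : ℝ := |t - round t|

/-!
Round `N xₙ` down to a residue `aₙ ∈ ℤ/N`. Counting, for each `j`, the points whose residue lies
in the window `j + [0, S)` and applying Cauchy–Schwarz to these window counts gives
`S² N ≤ ∑_{m,n} r(aₘ - aₙ)`, where `r(d) ≤ (S - |d|)₊` is the number of ways of writing `d` as a
difference of two elements of `[0, S)`: the circulant quadratic form of the triangle kernel is
large. Since `N ‖xₘ - xₙ‖ < |aₘ - aₙ| + 1`, `r(aₘ - aₙ)` is at most the number of `s ∈ [1, S]`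
with `‖xₘ - xₙ‖ ≤ s / N`, and summing over pairs gives `S² ≤ ∑_{s ≤ S} (F_N(s) + 1)`.
-/

theorem Finset.sum_card_filter_mul_card_filter_eq {α β : Type*} [Fintype β] [DecidableEq β]
    (A B : Finset α) (g h : α → β) :
    ∑ j, #{k ∈ A | g k = j} * #{l ∈ B | h l = j} = #{q ∈ A ×ˢ B | g q.1 = h q.2} := by
  rw [card_eq_sum_card_fiberwise (f := fun q => g q.1) (t := univ) (fun _ _ => mem_univ _)]
  refine sum_congr rfl fun j _ => ?_
  rw [← card_product, filter_filter, ← filter_product]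
  congr 1
  refine filter_congr fun q _ => ?_
  constructor
  · rintro ⟨h1, h2⟩; exact ⟨h1.trans h2.symm, h1⟩
  · rintro ⟨h1, h2⟩; exact ⟨h2, h1 ▸ h2⟩

theorem sq_card_mul_card_le_card_mul_sum_card_sub_eq {G ι β : Type*} [AddCommGroup G]
    [Fintype G] [DecidableEq G] [Fintype ι] (A : Finset β) (f : β → G) (a : ι → G) :
    (#A * Fintype.card ι) ^ 2
      ≤ Fintype.card G * ∑ m, ∑ n, #{q ∈ A ×ˢ A | f q.1 - f q.2 = a m - a n} := by
  set W : G → ℕ := fun j => ∑ n, #{k ∈ A | a n - f k = j}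
  have hsum : ∑ j, W j = #A * Fintype.card ι := by
    rw [sum_comm, mul_comm, ← smul_eq_mul, ← card_univ, ← sum_const]
    exact sum_congr rfl fun n _ =>
      (card_eq_sum_card_fiberwise (t := univ) fun _ _ => mem_univ _).symm
  have hsq : ∑ j, W j ^ 2 = ∑ m, ∑ n, #{q ∈ A ×ˢ A | f q.1 - f q.2 = a m - a n} := by
    simp only [W, sq, sum_mul_sum]
    rw [sum_comm]
    refine sum_congr rfl fun m _ => ?_
    rw [sum_comm]
    refine sum_congr rfl fun n _ => ?_
    rw [sum_card_filter_mul_card_filter_eq]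
    congr 1
    exact filter_congr fun q _ => by rw [sub_eq_sub_iff_sub_eq_sub, eq_comm]
  calc (#A * Fintype.card ι) ^ 2 = (∑ j, W j) ^ 2 := by rw [hsum]
    _ ≤ Fintype.card G * ∑ j, W j ^ 2 := sq_sum_le_card_mul_sum_sq
    _ = _ := by rw [hsq]

theorem ZMod.valMinAbs_natCast_sub_natCast {N S k l : ℕ} [NeZero N] (hSN : 2 * S ≤ N)
    (hk : k < S) (hl : l < S) : ((k : ZMod N) - l).valMinAbs = (k : ℤ) - l := by
  rw [ZMod.valMinAbs_spec]
  push_cast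
  refine ⟨rfl, ?_, ?_⟩ <;> omega

theorem card_filter_natCast_sub_eq_le {N S : ℕ} [NeZero N] (hSN : 2 * S ≤ N) (d : ZMod N) :
    #{q ∈ range S ×ˢ range S | (q.1 : ZMod N) - q.2 = d} ≤ S - d.valMinAbs.natAbs := by
  have hdiff : ∀ q ∈ {q ∈ range S ×ˢ range S | (q.1 : ZMod N) - q.2 = d},
      q.1 < S ∧ q.2 < S ∧ d.valMinAbs = (q.1 : ℤ) - q.2 := by
    intro q hq
    simp only [mem_filter, mem_product, mem_range] at hq
    obtain ⟨⟨h1, h2⟩, rfl⟩ := hq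
    exact ⟨h1, h2, ZMod.valMinAbs_natCast_sub_natCast hSN h1 h2⟩
  calc _ ≤ #(range (S - d.valMinAbs.natAbs)) := by
        refine card_le_card_of_injOn (fun q => min q.1 q.2) (fun q hq => ?_) fun q hq q' hq' h => ?_
        · obtain ⟨h1, h2, h3⟩ := hdiff q hq
          simp only [coe_range, Set.mem_Iio]
          omega
        · obtain ⟨h1, h2, h3⟩ := hdiff q hq
          obtain ⟨h1', h2', h3'⟩ := hdiff q' hq'
          simp only at h
          exact Prod.ext (by omega) (by omega)
    _ = S - d.valMinAbs.natAbs := card_range _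

theorem mul_distToInt_lt_natAbs_valMinAbs_add_one {N : ℕ} [NeZero N] {y : ℝ} {D : ℤ}
    (hD : |N * y - D| < 1) : N * distToInt y < (D : ZMod N).valMinAbs.natAbs + 1 := by
  set e := (D : ZMod N).valMinAbs
  obtain ⟨K, hK⟩ : (N : ℤ) ∣ D - e := by
    rw [← ZMod.intCast_zmod_eq_zero_iff_dvd, Int.cast_sub, ZMod.coe_valMinAbs, sub_self]
  have hKR : (D : ℝ) - e = N * K := by exact_mod_cast hK
  have hN : (0 : ℝ) ≤ N := N.cast_nonneg
  calc N * distToInt y ≤ N * |y - K| := mul_le_mul_of_nonneg_left (round_le y K) hN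
    _ = |(N * y - D) + e| := by
      rw [← abs_of_nonneg hN, ← abs_mul, abs_of_nonneg hN]
      congr 1
      linear_combination hKR
    _ ≤ |N * y - D| + |(e : ℝ)| := abs_add_le _ _
    _ < 1 + |(e : ℝ)| := by gcongr
    _ = e.natAbs + 1 := by rw [Nat.cast_natAbs, Int.cast_abs, add_comm]

theorem sub_le_card_filter_le_div {S e : ℕ} {c δ : ℝ} (hc : 0 < c) (h : c * δ < e + 1) :
    S - e ≤ #((Icc 1 S).filter fun s : ℕ => δ ≤ s / c) := by
  calc S - e = #(Icc (e + 1) S) := by rw [Nat.card_Icc]; omega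
    _ ≤ _ := card_le_card fun s hs => by
      simp only [mem_Icc] at hs
      simp only [mem_filter, mem_Icc]
      refine ⟨⟨by omega, hs.2⟩, ?_⟩
      rw [le_div_iff₀ hc]
      have : (e : ℝ) + 1 ≤ s := by exact_mod_cast hs.1
      linarith

theorem abs_mul_sub_sub_floor_sub_floor_lt_one (c y z : ℝ) :
    |c * (y - z) - ((⌊c * y⌋ - ⌊c * z⌋ : ℤ) : ℝ)| < 1 := by
  have hy := Int.floor_le (c * y)
  have hy' := Int.lt_floor_add_one (c * y)
  have hz := Int.floor_le (c * z)
  have hz' := Int.lt_floor_add_one (c * z)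
  rw [abs_lt]
  push_cast
  constructor <;> linarith

theorem card_filter_ne_and_add_card {α : Type*} [Fintype α] [DecidableEq α] (P : α × α → Prop)
    [DecidablePred P] (hP : ∀ a, P (a, a)) :
    #{p | p.1 ≠ p.2 ∧ P p} + Fintype.card α = #{p | P p} := by
  rw [← card_filter_add_card_filter_not (s := {p | P p}) (fun p : α × α => p.1 ≠ p.2),
    filter_filter, filter_filter]
  congr 1
  · exact congrArg card (filter_congr fun p _ => and_comm)
  · rw [← card_univ, ← card_map ⟨fun a => (a, a), fun a b h => (Prod.ext_iff.1 h).1⟩]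
    congr 1
    ext p
    simp only [mem_map, mem_univ, true_and, mem_filter, not_not]
    constructor
    · rintro ⟨a, rfl⟩; exact ⟨hP a, rfl⟩
    · rintro ⟨-, h⟩; exact ⟨p.1, Prod.ext rfl h⟩

theorem stmt_7_general (N : ℕ) (x : Fin N → ℝ)
    (F : ℕ → ℝ)
    (hF : ∀ s : ℕ, F s = (1 / N : ℝ) * (Finset.univ.filter (fun p : Fin N × Fin N =>
      p.1 ≠ p.2 ∧ distToInt (x p.1 - x p.2) ≤ (s : ℝ) / N)).card)
    (S : ℕ) (hSN : 2 * S < N) :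
    (S : ℝ) ≤ (1 / S : ℝ) * ∑ s ∈ Finset.Icc 1 S, (F s + 1) := by
  have : NeZero N := ⟨by omega⟩
  have hN : (0 : ℝ) < N := by exact_mod_cast NeZero.pos N
  set close : ℕ → Fin N → Fin N → Prop := fun s m n => distToInt (x m - x n) ≤ (s : ℝ) / N
  set a : Fin N → ZMod N := fun n => ((⌊N * x n⌋ : ℤ) : ZMod N)
  have hF1 (s : ℕ) : F s + 1 = (1 / N : ℝ) * #{p : Fin N × Fin N | close s p.1 p.2} := by
    have hself (n : Fin N) : close s n n := by
      simp only [close, distToInt, sub_self, round_zero, Int.cast_zero, abs_zero]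
      positivity
    rw [hF, ← card_filter_ne_and_add_card (fun p : Fin N × Fin N => close s p.1 p.2) hself,
      Fintype.card_fin, Nat.cast_add, mul_add, one_div_mul_cancel hN.ne']
  have hpair (m n : Fin N) : #{q ∈ range S ×ˢ range S | (q.1 : ZMod N) - q.2 = a m - a n}
      ≤ #((Icc 1 S).filter fun s => close s m n) := by
    refine (card_filter_natCast_sub_eq_le (by omega) _).trans (sub_le_card_filter_le_div hN ?_)
    rw [← Int.cast_sub]
    exact mul_distToInt_lt_natAbs_valMinAbs_add_one (abs_mul_sub_sub_floor_sub_floor_lt_one _ _ _)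
  have hcount : N * (S ^ 2 * N) ≤ N * ∑ s ∈ Icc 1 S, #{p : Fin N × Fin N | close s p.1 p.2} :=
    calc N * (S ^ 2 * N) = (#(range S) * Fintype.card (Fin N)) ^ 2 := by
          rw [card_range, Fintype.card_fin]; ring
      _ ≤ N * ∑ m, ∑ n, #{q ∈ range S ×ˢ range S | (q.1 : ZMod N) - q.2 = a m - a n} := by
        simpa using sq_card_mul_card_le_card_mul_sum_card_sub_eq (range S) Nat.cast a
      _ ≤ N * ∑ m, ∑ n, #((Icc 1 S).filter fun s => close s m n) := by gcongr; exact hpair ..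
      _ = _ := by simp only [card_filter]; rw [← Fintype.sum_prod_type', sum_comm]
  have hsq : (S : ℝ) ^ 2 ≤ ∑ s ∈ Icc 1 S, (F s + 1) := by
    rw [sum_congr rfl fun s _ => hF1 s, ← mul_sum, ← Nat.cast_sum, one_div_mul_eq_div,
      le_div_iff₀ hN]
    exact_mod_cast Nat.le_of_mul_le_mul_left hcount (NeZero.pos N)
  calc (S : ℝ) = 1 / S * S ^ 2 := by rw [one_div_mul_eq_div, sq, mul_self_div_self]
    _ ≤ _ := by gcongr

theorem stmt_7 (N : ℕ) (x : Fin N → ℝ)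
    (hx : ∀ n, x n ∈ Set.Ico (0 : ℝ) 1)
    (F : ℕ → ℝ)
    (hF : ∀ s : ℕ, F s = (1 / N : ℝ) * (Finset.univ.filter (fun p : Fin N × Fin N =>
      p.1 ≠ p.2 ∧ distToInt (x p.1 - x p.2) ≤ (s : ℝ) / N)).card)
    (S : ℕ) (hS : 1 ≤ S) (hSN : 2 * S < N) :
    (S : ℝ) ≤ (1 / S : ℝ) * ∑ s ∈ Finset.Icc 1 S, (F s + 1) :=
  stmt_7_general N x F hF S hSN
end
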